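/- arXiv:math/0511295 — 2 statements merged into one kernel-verified Lean document; each statement's English description precedes it below -/
import Mathlib

section
/- Let n be odd with gcd(n,q)=1. The map μ_{-q} (multiplication by −q mod n) fixes no q^2-cyclotomic coset modulo n if and only if gcd(n, q^(2i−1) + 1) = 1 for every positive integer i. -/
theorem stmt_14 (q n : ℕ) (hq : IsPrimePow q) (hn : Odd n) (hn1 : 1 < n)
    (hgcd : Nat.Coprime n q) :
    (∀ a : ℤ, ¬ (n : ℤ) ∣ a → ∀ i : ℕ, 0 < i →
        ¬ ((-(q : ℤ)) * a ≡ (q : ℤ) ^ (2 * i) * a [ZMOD (n : ℤ)])) ↔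
      ∀ i : ℕ, 0 < i → Nat.gcd n (q ^ (2 * i - 1) + 1) = 1 := by
  have hn0 : 0 < n := by omega
  have hcop : IsCoprime (n : ℤ) (q : ℤ) := by
    rw [Int.isCoprime_iff_gcd_eq_one]
    exact_mod_cast hgcd
  have key : ∀ (a : ℤ) (i : ℕ), 0 < i →
      (((-(q : ℤ)) * a ≡ (q : ℤ) ^ (2 * i) * a [ZMOD (n : ℤ)]) ↔
        (n : ℤ) ∣ ((q : ℤ) ^ (2 * i - 1) + 1) * a) := by
    intro a i hi
    rw [show ((-(q : ℤ)) * a ≡ (q : ℤ) ^ (2 * i) * a [ZMOD (n : ℤ)]) ↔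
        (n : ℤ) ∣ ((q : ℤ) ^ (2 * i) * a - (-(q : ℤ)) * a) from Int.modEq_iff_dvd]
    obtain ⟨j, hj1, hj2⟩ : ∃ j, 2 * i = j + 1 ∧ 2 * i - 1 = j := ⟨2 * i - 1, by omega, rfl⟩
    rw [hj2, hj1]
    rw [show (q : ℤ) ^ (j + 1) * a - (-(q : ℤ)) * a
        = (q : ℤ) * (((q : ℤ) ^ j + 1) * a) from by rw [pow_succ]; ring]
    constructor
    · exact fun h => hcop.dvd_of_dvd_mul_left h
    · exact fun h => h.mul_left _
  constructor
  · intro H i hi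
    by_contra hne
    set d := Nat.gcd n (q ^ (2 * i - 1) + 1) with hd
    have hdn : d ∣ n := Nat.gcd_dvd_left _ _
    have hdm : d ∣ q ^ (2 * i - 1) + 1 := Nat.gcd_dvd_right _ _
    have hd0 : 0 < d := Nat.gcd_pos_of_pos_left _ hn0
    have hd1 : 1 < d := by omega
    set a : ℕ := n / d with ha
    have ha0 : 0 < a := Nat.div_pos (Nat.le_of_dvd hn0 hdn) hd0
    have haltn : a < n := Nat.div_lt_self hn0 hd1
    have hndvd : ¬ (n : ℤ) ∣ (a : ℤ) := by
      intro h
      have := Int.le_of_dvd (by exact_mod_cast ha0) h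
      have : n ≤ a := by exact_mod_cast this
      omega
    apply H (a : ℤ) hndvd i hi
    rw [key _ i hi]
    have : n ∣ (q ^ (2 * i - 1) + 1) * a := by
      obtain ⟨k, hk⟩ := hdm
      have hn' : n = d * a := by rw [ha, Nat.mul_div_cancel' hdn]
      rw [hk, hn']
      exact ⟨k, by ring⟩
    have := Int.natCast_dvd_natCast.mpr this
    push_cast at this
    convert this using 1
  · intro H a ha i hi h
    rw [key _ i hi] at h
    have hcop2 : IsCoprime (n : ℤ) ((q : ℤ) ^ (2 * i - 1) + 1) := by
      rw [Int.isCoprime_iff_gcd_eq_one]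
      rw [show ((q : ℤ) ^ (2 * i - 1) + 1) = ((q ^ (2 * i - 1) + 1 : ℕ) : ℤ) from by push_cast; ring]
      rw [Int.gcd_natCast_natCast]
      exact H i hi
    exact ha (hcop2.dvd_of_dvd_mul_left h)
end

section
/- Let n be odd with gcd(n,q)=1. The map μ_{-q} fixes no q^2-cyclotomic coset modulo n if and only if for every prime r dividing n, ord_r(q) is not congruent to 2 modulo 4. -/
private lemma aux_ord_mod_four {r q k : ℕ} (hr : r.Prime) (hr2 : 2 < r)
    (hk : Odd k) (hpow : (q : ZMod r) ^ k = -1) :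
    orderOf (q : ZMod r) % 4 = 2 := by
  haveI : Fact r.Prime := ⟨hr⟩
  haveI : Fact (2 < r) := ⟨hr2⟩
  set x : ZMod r := (q : ZMod r) with hx
  set d := orderOf x with hd
  have h2k : x ^ (2 * k) = 1 := by
    rw [two_mul, pow_add, hpow]; ring
  have hd2k : d ∣ 2 * k := orderOf_dvd_of_pow_eq_one h2k
  have hdk : ¬ d ∣ k := by
    intro h
    have : x ^ k = 1 := orderOf_dvd_iff_pow_eq_one.mp h
    rw [hpow] at this
    exact ZMod.neg_one_ne_one this
  have hdeven : 2 ∣ d := by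
    by_contra h
    have hcop : Nat.Coprime d 2 :=
      ((Nat.prime_two.coprime_iff_not_dvd).mpr h).symm
    exact hdk (hcop.dvd_of_dvd_mul_left hd2k)
  obtain ⟨e, he⟩ := hdeven
  have hek : e ∣ k := by
    have h2 : 2 * e ∣ 2 * k := by rw [← he]; exact hd2k
    exact (mul_dvd_mul_iff_left (by norm_num : (2:ℕ) ≠ 0)).mp h2
  have heodd : Odd e := by
    rcases Nat.even_or_odd e with h | h
    · exfalso
      have h2 : 2 ∣ k := dvd_trans h.two_dvd hek
      obtain ⟨u, hu⟩ := hk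
      omega
    · exact h
  obtain ⟨t, ht⟩ := heodd
  omega

theorem stmt_15 (q n : ℕ) (hq : IsPrimePow q) (hn : Odd n) (hn1 : 1 < n)
    (hgcd : Nat.Coprime n q) :
    (∀ a : ℤ, ¬ (n : ℤ) ∣ a → ∀ i : ℕ, 0 < i →
        ¬ ((-(q : ℤ)) * a ≡ (q : ℤ) ^ (2 * i) * a [ZMOD (n : ℤ)])) ↔
      ∀ r : ℕ, r.Prime → r ∣ n → orderOf (q : ZMod r) % 4 ≠ 2 := by
  have hn0 : 0 < n := by omega
  have hnodd : n % 2 = 1 := Nat.odd_iff.mp hn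
  have rodd : ∀ r : ℕ, r.Prime → r ∣ n → 2 < r := by
    intro r hr hrn
    rcases Nat.lt_or_ge 2 r with h | h
    · exact h
    · exfalso
      have h2 : r = 2 := le_antisymm h hr.two_le
      subst h2
      obtain ⟨c, hc⟩ := hrn
      omega
  constructor
  · -- LHS → RHS
    intro hL r hr hrn hd4
    haveI : Fact r.Prime := ⟨hr⟩
    have hr2 : 2 < r := rodd r hr hrn
    haveI : Fact (2 < r) := ⟨hr2⟩
    set x : ZMod r := (q : ZMod r) with hx
    set d := orderOf x with hd
    obtain ⟨e, he⟩ : 2 ∣ d := by omega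
    have hepos : 0 < e := by omega
    have helt : e < d := by omega
    have hxd : x ^ d = 1 := pow_orderOf_eq_one x
    have hsq : x ^ e * x ^ e = 1 := by
      rw [← pow_add, ← two_mul, ← he, hxd]
    have hne1 : x ^ e ≠ 1 := by
      intro h
      have h1 := orderOf_dvd_iff_pow_eq_one.mpr h
      rw [← hd] at h1
      have := Nat.le_of_dvd hepos h1
      omega
    have hxe : x ^ e = -1 := by
      rcases mul_self_eq_one_iff.mp hsq with h | h
      · exact absurd h hne1
      · exact h
    have hrdvd : r ∣ q ^ e + 1 := by
      have hz : ((q ^ e + 1 : ℕ) : ZMod r) = 0 := by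
        push_cast
        rw [← hx, hxe]
        ring
      exact (ZMod.natCast_eq_zero_iff _ _).mp hz
    obtain ⟨t, ht⟩ : Odd e := by rw [Nat.odd_iff]; omega
    have hnr : r * (n / r) = n := Nat.mul_div_cancel' hrn
    have hnra : ¬ (n : ℤ) ∣ ((n / r : ℕ) : ℤ) := by
      intro h
      have h1 : 0 < n / r := Nat.div_pos (Nat.le_of_dvd hn0 hrn) (by omega)
      have h2 : n / r < n := Nat.div_lt_self hn0 (by omega)
      have := Int.le_of_dvd (by exact_mod_cast h1) h
      omega
    apply hL ((n / r : ℕ) : ℤ) hnra (t + 1) (by omega)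
    rw [Int.modEq_iff_dvd]
    have hnat : n ∣ (q ^ e + 1) * (n / r) := by
      have h3 := mul_dvd_mul hrdvd (dvd_refl (n / r))
      rwa [hnr] at h3
    have hdvd : (n : ℤ) ∣ (((q ^ e + 1) * (n / r) : ℕ) : ℤ) :=
      Int.natCast_dvd_natCast.mpr hnat
    have heq : ((q : ℤ) ^ (2 * (t + 1)) * ((n / r : ℕ) : ℤ)) - (-(q : ℤ) * ((n / r : ℕ) : ℤ)) =
        (q : ℤ) * (((q ^ e + 1) * (n / r) : ℕ) : ℤ) := by
      push_cast
      rw [ht]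
      ring
    rw [heq]
    exact Dvd.dvd.mul_left hdvd _
  · -- RHS → LHS
    intro hR a ha i hi hmod
    set k := 2 * i - 1 with hk
    have hk2 : 2 * i = k + 1 := by omega
    have hkodd : Odd k := ⟨i - 1, by omega⟩
    have hdvd : (n : ℤ) ∣ (q : ℤ) * (a * ((q ^ k + 1 : ℕ) : ℤ)) := by
      have h1 := Int.ModEq.dvd hmod
      have heq : ((q:ℤ)) ^ (2 * i) * a - -(q:ℤ) * a =
          (q:ℤ) * (a * ((q ^ k + 1 : ℕ) : ℤ)) := by
        push_cast
        rw [hk2]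
        ring
      rw [heq] at h1
      exact h1
    have hcopq : IsCoprime (n : ℤ) (q : ℤ) := Nat.isCoprime_iff_coprime.mpr hgcd
    have hdvd2 : (n : ℤ) ∣ a * ((q ^ k + 1 : ℕ) : ℤ) := hcopq.dvd_of_dvd_mul_left hdvd
    by_cases hco : Nat.Coprime n (q ^ k + 1)
    · have hic : IsCoprime (n : ℤ) ((q ^ k + 1 : ℕ) : ℤ) := Nat.isCoprime_iff_coprime.mpr hco
      exact ha (hic.dvd_of_dvd_mul_right hdvd2)
    · obtain ⟨r, hr, hrg⟩ := Nat.exists_prime_and_dvd (show Nat.gcd n (q ^ k + 1) ≠ 1 from hco)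
      have hrn : r ∣ n := hrg.trans (Nat.gcd_dvd_left _ _)
      have hrM : r ∣ q ^ k + 1 := hrg.trans (Nat.gcd_dvd_right _ _)
      haveI : Fact r.Prime := ⟨hr⟩
      have hr2 : 2 < r := rodd r hr hrn
      have hpow : (q : ZMod r) ^ k = -1 := by
        have hz : ((q ^ k + 1 : ℕ) : ZMod r) = 0 :=
          (ZMod.natCast_eq_zero_iff _ _).mpr hrM
        push_cast at hz
        linear_combination hz
      exact hR r hr hrn (aux_ord_mod_four hr hr2 hkodd hpow)
end
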